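/- arXiv:2007.07853 — 3 statements merged into one kernel-verified Lean document; each statement's English description precedes it below -/
import Mathlib

section
/- If S₁ and S₂ are both modular sets for output coordinate j of P, then S₁ ∩ S₂ is modular for j, provided the domain is all of Fin n → ℝ (a product space). Consequently, on a full product domain, the minimal modular set for each output coordinate is unique. -/
def Modular {n m : ℕ} (P : (Fin n → ℝ) → (Fin m → ℝ)) (j : Fin m) (S : Finset (Fin n)) : Prop :=
  ∀ x x' : Fin n → ℝ, (∀ i ∈ S, x i = x' i) → P x j = P x' j

/-!
Given `x`, `x'` agreeing on `S₁ ∩ S₂`, the point that equals `x` on `S₁` and `x'` elsewhere agrees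
with `x` on `S₁` and with `x'` on `S₂`, so modularity for `S₁` and for `S₂` chain to
`P x j = P x' j`. Hence modular sets are closed under intersection, and in a family closed under
intersection two minimal members `S`, `S'` both equal `S ∩ S'`.
-/

theorem InfClosed.eq_of_minimal {α : Type*} [SemilatticeInf α] {p : α → Prop}
    (hp : InfClosed {a | p a}) {a b : α} (ha : Minimal p a) (hb : Minimal p b) : a = b := by
  have hab : p (a ⊓ b) := hp ha.prop hb.prop
  calc a = a ⊓ b := (ha.eq_of_le hab inf_le_left).symm
    _ = b := hb.eq_of_le hab inf_le_right

theorem Modular.inter {n m : ℕ} {P : (Fin n → ℝ) → (Fin m → ℝ)} {j : Fin m}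
    {S₁ S₂ : Finset (Fin n)} (h₁ : Modular P j S₁) (h₂ : Modular P j S₂) :
    Modular P j (S₁ ∩ S₂) := by
  intro x x' hxx'
  have hx : P x j = P (S₁.piecewise x x') j :=
    h₁ _ _ fun i hi => (S₁.piecewise_eq_of_mem x x' hi).symm
  have hx' : P (S₁.piecewise x x') j = P x' j := by
    refine h₂ _ _ fun i hi => ?_
    by_cases hi₁ : i ∈ S₁
    · rw [S₁.piecewise_eq_of_mem x x' hi₁]
      exact hxx' i (Finset.mem_inter.mpr ⟨hi₁, hi⟩)
    · exact S₁.piecewise_eq_of_notMem x x' hi₁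
  exact hx.trans hx'

theorem modular_inter_and_unique_minimal (n m : ℕ) (P : (Fin n → ℝ) → (Fin m → ℝ)) (j : Fin m) :
    (∀ S₁ S₂ : Finset (Fin n), Modular P j S₁ → Modular P j S₂ → Modular P j (S₁ ∩ S₂)) ∧
    (∀ S S' : Finset (Fin n),
      (Modular P j S ∧ ∀ T ⊂ S, ¬ Modular P j T) →
      (Modular P j S' ∧ ∀ T ⊂ S', ¬ Modular P j T) → S = S') := by
  refine ⟨fun _ _ => Modular.inter, fun S S' hS hS' => ?_⟩
  have hclosed : InfClosed {S | Modular P j S} := fun _ h₁ _ h₂ => h₁.inter h₂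
  exact hclosed.eq_of_minimal (minimal_iff_forall_lt.mpr hS) (minimal_iff_forall_lt.mpr hS')
end

section
/- Uniqueness of the causal graph on full product domains: if P : (Fin n → ℝ) → (Fin m → ℝ) is defined on the entire product space, then for each j : Fin m there is exactly one minimal modular set S_j ⊆ Fin n, namely the intersection of all modular sets for j. -/
/-!
On a full product domain, if `f` depends only on the coordinates in `s` and only on those in `t`,
then it depends only on those in `s ∩ t`: to compare `f x` with `f y`, pass through the point
that agrees with `x` on `s` and with `y` off `s`. Hence the finitely many modular sets for `j`
have a modular intersection, which is then the least modular set, so the unique minimal one.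
-/

open Set

section DependsOn

variable {ι : Type*} {α : ι → Type*} {β : Type*} {f : (Π i, α i) → β}

theorem DependsOn.inter {s t : Set ι} (hs : DependsOn f s) (ht : DependsOn f t) :
    DependsOn f (s ∩ t) := by
  classical
  intro x y hxy
  calc f x = f (s.piecewise x y) := hs fun i hi => (s.piecewise_eq_of_mem x y hi).symm
    _ = f y := ht fun i hit => by
      by_cases his : i ∈ s
      · rw [s.piecewise_eq_of_mem x y his, hxy i ⟨his, hit⟩]
      · exact s.piecewise_eq_of_notMem x y his

theorem DependsOn.sInter {𝒮 : Set (Set ι)} (h𝒮 : 𝒮.Finite) (hf : ∀ s ∈ 𝒮, DependsOn f s) :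
    DependsOn f (⋂₀ 𝒮) := by
  induction 𝒮, h𝒮 using Set.Finite.induction_on with
  | empty => simpa using dependsOn_univ f
  | @insert s 𝒮 _ _ ih =>
    rw [sInter_insert]
    exact (hf s (mem_insert s 𝒮)).inter (ih fun t ht => hf t (mem_insert_of_mem s ht))

theorem DependsOn.iInter {κ : Type*} [Finite κ] {s : κ → Set ι} (hf : ∀ k, DependsOn f (s k)) :
    DependsOn f (⋂ k, s k) := by
  rw [← sInter_range]
  exact DependsOn.sInter (finite_range s) (forall_mem_range.2 hf)

end DependsOn

section Modular

variable {n m : ℕ} {P : (Fin n → ℝ) → (Fin m → ℝ)} {j : Fin m}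

theorem modular_iff_dependsOn {S : Finset (Fin n)} :
    Modular P j S ↔ DependsOn (P · j) (S : Set (Fin n)) :=
  ⟨fun h _ _ => h _ _, fun h _ _ => @h _ _⟩

open Classical in
theorem modular_iInter_modular :
    Modular P j {i | ∀ T, Modular P j T → i ∈ T} := by
  rw [modular_iff_dependsOn]
  convert DependsOn.iInter (κ := {T // Modular P j T})
    fun T => modular_iff_dependsOn.1 T.2 using 1
  ext i
  simp

end Modular

theorem unique_minimal_modular (n m : ℕ) (P : (Fin n → ℝ) → (Fin m → ℝ)) (j : Fin m) :
    ∃! S : Finset (Fin n),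
      (Modular P j S ∧ ∀ T ⊂ S, ¬ Modular P j T) ∧
      (∀ i : Fin n, i ∈ S ↔ ∀ T : Finset (Fin n), Modular P j T → i ∈ T) := by
  classical
  set S₀ : Finset (Fin n) := {i | ∀ T, Modular P j T → i ∈ T}
  have mem_S₀ (i : Fin n) : i ∈ S₀ ↔ ∀ T, Modular P j T → i ∈ T := by simp [S₀]
  have minimal (T : Finset (Fin n)) (hT : T ⊂ S₀) : ¬ Modular P j T := fun hTmod =>
    hT.not_subset fun i hi => (mem_S₀ i).1 hi T hTmod
  refine ⟨S₀, ⟨⟨modular_iInter_modular, minimal⟩, mem_S₀⟩, fun S hS => ?_⟩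
  ext i
  rw [hS.2 i, mem_S₀ i]
end

section
/- Robustness to nuisance perturbations: suppose S is modular for output j under both P and P_θ, and suppose P_θ agrees with P on a set D ⊆ (Fin n → ℝ) whose projection to coordinates S is all of (S → ℝ). Then (P_θ x) j = (P x) j for all x : Fin n → ℝ (not just x ∈ D). -/
open Function Set

theorem Modular.dependsOn {n m : ℕ} {P : (Fin n → ℝ) → (Fin m → ℝ)} {j : Fin m}
    {S : Finset (Fin n)} (hP : Modular P j S) : DependsOn (fun x => P x j) (S : Set (Fin n)) :=
  fun x x' h => hP x x' h

theorem DependsOn.eq_of_eqOn_of_forall_exists_restrict_eq {ι β : Type*} {α : ι → Type*}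
    {f g : (Π i, α i) → β} {s : Set ι} {D : Set (Π i, α i)}
    (hf : DependsOn f s) (hg : DependsOn g s) (hfg : EqOn f g D)
    (hD : ∀ v : (Π i : s, α i), ∃ x ∈ D, ∀ i : s, x i = v i) : f = g := by
  funext x
  obtain ⟨y, hyD, hy⟩ := hD fun i => x i
  calc f x = f y := hf fun i hi => (hy ⟨i, hi⟩).symm
    _ = g y := hfg hyD
    _ = g x := hg fun i hi => hy ⟨i, hi⟩

theorem robustness_to_nuisance (n m : ℕ) (P Pθ : (Fin n → ℝ) → (Fin m → ℝ))
    (j : Fin m) (S : Finset (Fin n)) (D : Set (Fin n → ℝ))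
    (hP : Modular P j S) (hPθ : Modular Pθ j S)
    (hagree : ∀ x ∈ D, Pθ x j = P x j)
    (hproj : ∀ v : {i : Fin n // i ∈ S} → ℝ, ∃ x ∈ D, ∀ i : {i : Fin n // i ∈ S}, x i.1 = v i) :
    ∀ x : Fin n → ℝ, Pθ x j = P x j :=
  congrFun (hPθ.dependsOn.eq_of_eqOn_of_forall_exists_restrict_eq hP.dependsOn hagree hproj)
end
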